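/- Contraction of the exact projected Newton step at a fixed frequency: let X and Y be real Hilbert spaces and F : X → Y twice continuously Fréchet differentiable with ‖F'(x)‖ ≤ d₁ and ‖F''(x)‖ ≤ d₃ for all x ∈ X. Let X' ⊆ X be a closed subspace with orthogonal projection P, let r̃ ∈ X' satisfy F(r̃) = 0, and let σ > 0 satisfy ‖F'(r̃)x‖ ≥ σ‖x‖ for all x ∈ X. Let d₀ > 0, let ε be a real number with 0 < ε < 3, let α > 0 satisfy α ≤ εσ²/(3 − ε), and set c₀ := 4ε/(3 d₃ (9 d₁ + √α)). If r ∈ X' satisfies ‖r̃ − r‖ ≤ d₀c₀α and r⁺ := r − P R_α(F'(r)) F(r), then ‖r̃ − r⁺‖ ≤ (ε(1 + d₀)/3) ‖r̃ − r‖. -/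

import Mathlib

/-!
Write `A = F'(r)`, `v = r̃ - r` and `B = (αI + A*A)⁻¹`. Since `B A*A = I - αB` and `P v = v`,
`r̃ - r⁺ = α P B v + P B A* (F r + A v)`.
The first term is the regularization bias: `A` inherits the lower bound `σ - d₃‖v‖` from `F'(r̃)`,
so `α‖B v‖ ≤ α‖v‖ / (α + (σ - d₃‖v‖)²)`, which the choice of `α` makes at most
`ε/3 ‖v‖ + O(‖v‖²/α)`. The second term is the linearization error: `‖B A* y‖ ≤ ‖y‖ / (2√α)` and
`‖F r + A v‖ ≤ d₃‖v‖²/2` by Taylor. The closeness `‖v‖ ≤ d₀c₀α` absorbs both quadratic terms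
into `εd₀/3 ‖v‖`.
-/

open ContinuousLinearMap

theorem norm_image_sub_sub_fderiv_le {E G : Type*}
    [NormedAddCommGroup E] [NormedSpace ℝ E] [NormedAddCommGroup G] [NormedSpace ℝ G]
    {F : E → G} (hF : Differentiable ℝ F) {L : ℝ}
    (hlip : ∀ x y, ‖fderiv ℝ F y - fderiv ℝ F x‖ ≤ L * ‖y - x‖) (a b : E) :
    ‖F b - F a - fderiv ℝ F a (b - a)‖ ≤ L / 2 * ‖b - a‖ ^ 2 := by
  set v := b - a
  -- the remainder along the segment, whose derivative grows at most linearly in `t`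
  set g : ℝ → G := fun t => F (a + t • v) - F a - t • fderiv ℝ F a v
  have hg : ∀ t, HasDerivAt g (fderiv ℝ F (a + t • v) v - fderiv ℝ F a v) t := by
    intro t
    have hline : HasDerivAt (fun t : ℝ => a + t • v) v t := by
      simpa using ((hasDerivAt_id t).smul_const v).const_add a
    exact (((hF _).hasFDerivAt.comp_hasDerivAt t hline).sub_const (F a)).sub
      (by simpa using (hasDerivAt_id t).smul_const (fderiv ℝ F a v))
  have hbound : ∀ t ∈ Set.Ico (0 : ℝ) 1,
      ‖fderiv ℝ F (a + t • v) v - fderiv ℝ F a v‖ ≤ L * ‖v‖ ^ 2 * t := by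
    intro t ht
    calc ‖fderiv ℝ F (a + t • v) v - fderiv ℝ F a v‖
        ≤ ‖fderiv ℝ F (a + t • v) - fderiv ℝ F a‖ * ‖v‖ :=
          (fderiv ℝ F (a + t • v) - fderiv ℝ F a).le_opNorm v
      _ ≤ L * ‖a + t • v - a‖ * ‖v‖ := by gcongr; exact hlip a _
      _ = L * ‖v‖ ^ 2 * t := by
          rw [add_sub_cancel_left, norm_smul, Real.norm_of_nonneg ht.1]; ring
  have hend := image_norm_le_of_norm_deriv_right_le_deriv_boundary
    (fun t _ => (hg t).continuousAt.continuousWithinAt) (fun t _ => (hg t).hasDerivWithinAt)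
    (B := fun t => L / 2 * ‖v‖ ^ 2 * t ^ 2) (by simp [g])
    (fun t => ((hasDerivAt_pow 2 t).const_mul (L / 2 * ‖v‖ ^ 2)).congr_deriv (by ring))
    hbound (Set.right_mem_Icc.2 zero_le_one)
  simpa [g, v] using hend

theorem max_zero_sub_mul_norm_le_of_norm_sub_le {E G : Type*}
    [NormedAddCommGroup E] [NormedSpace ℝ E] [NormedAddCommGroup G] [NormedSpace ℝ G]
    {A₀ A : E →L[ℝ] G} {σ η : ℝ} (hlow : ∀ u, σ * ‖u‖ ≤ ‖A₀ u‖) (hA : ‖A - A₀‖ ≤ η)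
    (u : E) : max 0 (σ - η) * ‖u‖ ≤ ‖A u‖ := by
  rw [max_mul_of_nonneg _ _ (norm_nonneg u), zero_mul]
  refine max_le (norm_nonneg _) ?_
  have hdiff : ‖A₀ u - A u‖ ≤ η * ‖u‖ := by
    rw [norm_sub_rev] at hA
    exact ((A₀ - A).le_opNorm u).trans (by gcongr)
  linarith [hlow u, norm_sub_norm_le (A₀ u) (A u)]

section Projection

variable {E : Type*} [NormedAddCommGroup E] [InnerProductSpace ℝ E] {K : Submodule ℝ E} {x p : E}

theorem norm_le_of_sub_mem_orthogonal (hp : p ∈ K) (hxp : x - p ∈ Kᗮ) : ‖p‖ ≤ ‖x‖ := by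
  have hpyth := norm_add_sq_eq_norm_sq_add_norm_sq_real (K.inner_right_of_mem_orthogonal hp hxp)
  rw [add_sub_cancel] at hpyth
  exact (pow_le_pow_iff_left₀ (norm_nonneg _) (norm_nonneg _) two_ne_zero).1
    (by nlinarith [sq_nonneg ‖x - p‖])

theorem eq_of_sub_mem_orthogonal (hx : x ∈ K) (hp : p ∈ K) (hxp : x - p ∈ Kᗮ) : p = x :=
  (sub_eq_zero.1 (Submodule.disjoint_def.1 K.orthogonal_disjoint _ (K.sub_mem hx hp) hxp)).symm

end Projection

section Tikhonov

variable {X Y : Type*}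
    [NormedAddCommGroup X] [InnerProductSpace ℝ X] [CompleteSpace X]
    [NormedAddCommGroup Y] [InnerProductSpace ℝ Y] [CompleteSpace Y]
    (A : X →L[ℝ] Y) (α : ℝ) {B : X →L[ℝ] X}

/-- The regularized pseudoinverse `R_α(A)` is `B ∘L adjoint A` for the inverse `B` of this. -/
noncomputable def tikhonovOp : X →L[ℝ] X := α • 1 + adjoint A ∘L A

theorem inner_tikhonovOp_apply_self (u : X) :
    inner ℝ (tikhonovOp A α u) u = α * ‖u‖ ^ 2 + ‖A u‖ ^ 2 := by
  simp only [tikhonovOp, add_apply, smul_apply, one_apply_eq_self, comp_apply, inner_add_left,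
    real_inner_smul_left, adjoint_inner_left, real_inner_self_eq_norm_sq]

variable {A α}

theorem mul_norm_le_of_tikhonovOp_comp_eq_one {c : ℝ} (hc : 0 ≤ c)
    (hlow : ∀ u, c * ‖u‖ ≤ ‖A u‖) (hB : tikhonovOp A α ∘L B = 1) (x : X) :
    (α + c ^ 2) * ‖B x‖ ≤ ‖x‖ := by
  have hx : tikhonovOp A α (B x) = x := by simpa using DFunLike.congr_fun hB x
  have hinner := inner_tikhonovOp_apply_self A α (B x)
  rw [hx] at hinner
  have hcs : (c * ‖B x‖) ^ 2 ≤ ‖A (B x)‖ ^ 2 := pow_le_pow_left₀ (by positivity) (hlow _) 2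
  have hquad : (α + c ^ 2) * ‖B x‖ * ‖B x‖ ≤ ‖x‖ * ‖B x‖ := by
    nlinarith [real_inner_le_norm x (B x)]
  rcases (norm_nonneg (B x)).eq_or_lt with h0 | hpos
  · rw [← h0, mul_zero]; exact norm_nonneg x
  · exact le_of_mul_le_mul_right hquad hpos

theorem two_mul_sqrt_mul_norm_le_of_tikhonovOp_comp_eq_one (hα : 0 ≤ α)
    (hB : tikhonovOp A α ∘L B = 1) (y : Y) :
    2 * √α * ‖B (adjoint A y)‖ ≤ ‖y‖ := by
  set u := B (adjoint A y)
  have hu : tikhonovOp A α u = adjoint A y := by simpa using DFunLike.congr_fun hB (adjoint A y)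
  have hinner := inner_tikhonovOp_apply_self A α u
  rw [hu, adjoint_inner_left] at hinner
  -- `⟪y, A u⟫ ≤ ‖y‖ ‖A u‖ ≤ ‖y‖² / 4 + ‖A u‖²`
  have hsq : (2 * √α * ‖u‖) ^ 2 ≤ ‖y‖ ^ 2 := by
    rw [mul_pow, mul_pow, Real.sq_sqrt hα]
    nlinarith [real_inner_le_norm y (A u), sq_nonneg (‖y‖ - 2 * ‖A u‖)]
  exact (pow_le_pow_iff_left₀ (by positivity) (norm_nonneg _) two_ne_zero).1 hsq

theorem add_apply_regularizedInverse_eq {P : X →L[ℝ] X} {v : X} (hB : B ∘L tikhonovOp A α = 1)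
    (hPv : P v = v) (y : Y) :
    v + P (B (adjoint A y)) = α • P (B v) + P (B (adjoint A (y + A v))) := by
  have hv : α • B v + B (adjoint A (A v)) = v := by
    simpa [tikhonovOp] using DFunLike.congr_fun hB v
  calc v + P (B (adjoint A y)) = P (α • B v + B (adjoint A (A v))) + P (B (adjoint A y)) := by
        rw [hv, hPv]
    _ = α • P (B v) + P (B (adjoint A (y + A v))) := by
        simp only [map_add, map_smul]; abel

theorem norm_smul_apply_add_apply_adjoint_le {P : X →L[ℝ] X} (hP : ∀ x, ‖P x‖ ≤ ‖x‖)
    (hα : 0 < α) {c : ℝ} (hc : 0 ≤ c) (hlow : ∀ u, c * ‖u‖ ≤ ‖A u‖)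
    (hB : tikhonovOp A α ∘L B = 1) (v : X) (y : Y) :
    ‖α • P (B v) + P (B (adjoint A y))‖ ≤ α * (‖v‖ / (α + c ^ 2)) + ‖y‖ / (2 * √α) := by
  refine (norm_add_le _ _).trans (add_le_add ?_ ((hP _).trans ?_))
  · rw [norm_smul, Real.norm_of_nonneg hα.le]
    refine mul_le_mul_of_nonneg_left ((hP _).trans ?_) hα.le
    rw [le_div_iff₀ (by positivity), mul_comm]
    exact mul_norm_le_of_tikhonovOp_comp_eq_one hc hlow hB v
  · rw [le_div_iff₀ (by positivity), mul_comm]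
    exact two_mul_sqrt_mul_norm_le_of_tikhonovOp_comp_eq_one hα.le hB y

end Tikhonov

theorem regularization_bias_le {α δ m σ ε d₁ d₃ : ℝ} (hα : 0 < α) (hδ : 0 ≤ δ) (hd₃ : 0 ≤ d₃)
    (hσ : 0 ≤ σ) (hσd₁ : σ * δ ≤ d₁ * δ) (hm : σ - d₃ * δ ≤ m)
    (hε0 : 0 ≤ ε) (hε3 : ε < 3) (hαle : α ≤ ε * σ ^ 2 / (3 - ε)) :
    α * (δ / (α + m ^ 2)) ≤ ε / 3 * δ + 2 * d₁ * d₃ * δ ^ 2 / α := by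
  have hα3 : (3 - ε) * α ≤ ε * σ ^ 2 := by rwa [le_div_iff₀ (by linarith), mul_comm] at hαle
  have hsq : σ ^ 2 - m ^ 2 ≤ 2 * σ * (d₃ * δ) := by
    rcases le_total 0 (σ - d₃ * δ) with h | h
    · nlinarith [mul_self_le_mul_self h hm, sq_nonneg (d₃ * δ)]
    · nlinarith [mul_nonneg hσ (mul_nonneg hd₃ hδ)]
  have hσt : 0 ≤ σ * (d₃ * δ) := by positivity
  have h3α : 3 * α ≤ ε * (α + m ^ 2) + 6 * σ * (d₃ * δ) := by
    nlinarith [mul_le_mul_of_nonneg_left hsq hε0, mul_nonneg (sub_nonneg.2 hε3.le) hσt]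
  have hcross : σ * δ * (d₃ * α) ≤ d₁ * δ * (d₃ * (α + m ^ 2)) :=
    mul_le_mul hσd₁ (by nlinarith) (by positivity) ((mul_nonneg hσ hδ).trans hσd₁)
  have key : 3 * α ^ 2 * δ ≤ (ε * α * δ + 6 * d₁ * d₃ * δ ^ 2) * (α + m ^ 2) := by
    nlinarith [mul_le_mul_of_nonneg_left h3α (mul_nonneg hα.le hδ),
      mul_le_mul_of_nonneg_left hcross hδ]
  calc α * (δ / (α + m ^ 2)) = 3 * α ^ 2 * δ / (3 * α * (α + m ^ 2)) := by
        field_simp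
    _ ≤ (ε * α * δ + 6 * d₁ * d₃ * δ ^ 2) * (α + m ^ 2) / (3 * α * (α + m ^ 2)) := by
        gcongr
    _ = ε / 3 * δ + 2 * d₁ * d₃ * δ ^ 2 / α := by
        field_simp
        ring

theorem perturbation_add_linearization_le {α δ ε d₀ d₁ d₃ : ℝ} (hα : 0 < α) (hδ : 0 ≤ δ)
    (hd₁ : 0 ≤ d₁) (hd₃ : 0 < d₃) (hclose : δ ≤ d₀ * (4 * ε / (3 * d₃ * (9 * d₁ + √α))) * α) :
    2 * d₁ * d₃ * δ ^ 2 / α + d₃ / 2 * δ ^ 2 / (2 * √α) ≤ ε * d₀ / 3 * δ := by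
  obtain ⟨s, hs, rfl⟩ : ∃ s, 0 < s ∧ α = s ^ 2 :=
    ⟨√α, Real.sqrt_pos.2 hα, (Real.sq_sqrt hα.le).symm⟩
  rw [Real.sqrt_sq hs.le] at hclose ⊢
  have h : 3 * d₃ * δ * (9 * d₁ + s) ≤ 4 * ε * d₀ * s ^ 2 := by
    rw [mul_div_assoc', div_mul_eq_mul_div, le_div_iff₀ (by positivity)] at hclose
    linarith
  rw [div_add_div _ _ (by positivity) (by positivity), div_le_iff₀ (by positivity)]
  nlinarith [mul_le_mul_of_nonneg_left h hδ, mul_nonneg (mul_nonneg hd₁ hd₃.le) (sq_nonneg δ)]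

theorem stmt_14_general {X Y : Type*}
    [NormedAddCommGroup X] [InnerProductSpace ℝ X] [CompleteSpace X]
    [NormedAddCommGroup Y] [InnerProductSpace ℝ Y] [CompleteSpace Y]
    (F : X → Y) (hF : ContDiff ℝ 2 F)
    (d₁ d₃ : ℝ) (hd₁ : 0 < d₁) (hd₃ : 0 < d₃)
    (hF' : ∀ x : X, ‖fderiv ℝ F x‖ ≤ d₁)
    (hF'' : ∀ x : X, ‖fderiv ℝ (fderiv ℝ F) x‖ ≤ d₃)
    (X' : Submodule ℝ X)
    (P : X →L[ℝ] X) (hP : ∀ x : X, P x ∈ X' ∧ x - P x ∈ X'ᗮ)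
    (rt : X) (hrtmem : rt ∈ X') (hrt : F rt = 0)
    (σ : ℝ) (hσ : 0 < σ) (hlow : ∀ x : X, σ * ‖x‖ ≤ ‖fderiv ℝ F rt x‖)
    (d₀ : ℝ)
    (ε : ℝ) (hε0 : 0 < ε) (hε3 : ε < 3)
    (α : ℝ) (hα : 0 < α) (hαle : α ≤ ε * σ ^ 2 / (3 - ε))
    (c₀ : ℝ) (hc₀ : c₀ = 4 * ε / (3 * d₃ * (9 * d₁ + Real.sqrt α)))
    (r : X) (hrmem : r ∈ X') (hrclose : ‖rt - r‖ ≤ d₀ * c₀ * α)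
    (B : X →L[ℝ] X)
    (hB₁ : B ∘L (α • (1 : X →L[ℝ] X) +
      ContinuousLinearMap.adjoint (fderiv ℝ F r) ∘L fderiv ℝ F r) = 1)
    (hB₂ : (α • (1 : X →L[ℝ] X) +
      ContinuousLinearMap.adjoint (fderiv ℝ F r) ∘L fderiv ℝ F r) ∘L B = 1)
    (rplus : X)
    (hrplus : rplus =
      r - P ((B ∘L ContinuousLinearMap.adjoint (fderiv ℝ F r)) (F r))) :
    ‖rt - rplus‖ ≤ ε * (1 + d₀) / 3 * ‖rt - r‖ := by
  set A := fderiv ℝ F r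
  set v := rt - r
  have hlip : ∀ x y, ‖fderiv ℝ F y - fderiv ℝ F x‖ ≤ d₃ * ‖y - x‖ := fun x y =>
    convex_univ.norm_image_sub_le_of_norm_fderiv_le
      (fun z _ => ((hF.fderiv_right le_rfl).differentiable one_ne_zero).differentiableAt)
      (fun z _ => hF'' z) trivial trivial
  have hAlow : ∀ u, max 0 (σ - d₃ * ‖v‖) * ‖u‖ ≤ ‖A u‖ :=
    max_zero_sub_mul_norm_le_of_norm_sub_le hlow (by simpa only [norm_sub_rev r rt] using hlip rt r)
  have hσd₁ : σ * ‖v‖ ≤ d₁ * ‖v‖ :=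
    (hlow v).trans ((le_opNorm _ v).trans (by gcongr; exact hF' rt))
  have htaylor : ‖F r + A v‖ ≤ d₃ / 2 * ‖v‖ ^ 2 := by
    have h := norm_image_sub_sub_fderiv_le (hF.differentiable two_ne_zero) hlip r rt
    rwa [hrt, zero_sub, ← neg_add', norm_neg] at h
  have hPv : P v = v := eq_of_sub_mem_orthogonal (X'.sub_mem hrtmem hrmem) (hP v).1 (hP v).2
  have hstep : rt - rplus = α • P (B v) + P (B (adjoint A (F r + A v))) := by
    rw [hrplus, sub_sub_eq_add_sub, add_sub_right_comm, comp_apply]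
    exact add_apply_regularizedInverse_eq hB₁ hPv _
  have hPle : ∀ x, ‖P x‖ ≤ ‖x‖ := fun x => norm_le_of_sub_mem_orthogonal (hP x).1 (hP x).2
  calc ‖rt - rplus‖
      ≤ α * (‖v‖ / (α + max 0 (σ - d₃ * ‖v‖) ^ 2)) + ‖F r + A v‖ / (2 * √α) := by
        rw [hstep]
        exact norm_smul_apply_add_apply_adjoint_le hPle hα (le_max_left _ _) hAlow hB₂ _ _
    _ ≤ α * (‖v‖ / (α + max 0 (σ - d₃ * ‖v‖) ^ 2)) + d₃ / 2 * ‖v‖ ^ 2 / (2 * √α) := by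
        gcongr
    _ ≤ ε * (1 + d₀) / 3 * ‖v‖ := by
        linarith [regularization_bias_le hα (norm_nonneg v) hd₃.le hσ.le hσd₁ (le_max_right 0 _)
            hε0.le hε3 hαle,
          perturbation_add_linearization_le hα (norm_nonneg v) hd₁.le hd₃ (hc₀ ▸ hrclose)]

/-- Contraction of the exact projected Newton step at a fixed frequency. -/
theorem stmt_14 {X Y : Type*}
    [NormedAddCommGroup X] [InnerProductSpace ℝ X] [CompleteSpace X]
    [NormedAddCommGroup Y] [InnerProductSpace ℝ Y] [CompleteSpace Y]
    (F : X → Y) (hF : ContDiff ℝ 2 F)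
    (d₁ d₃ : ℝ) (hd₁ : 0 < d₁) (hd₃ : 0 < d₃)
    (hF' : ∀ x : X, ‖fderiv ℝ F x‖ ≤ d₁)
    (hF'' : ∀ x : X, ‖fderiv ℝ (fderiv ℝ F) x‖ ≤ d₃)
    (X' : Submodule ℝ X) (hX' : IsClosed (X' : Set X))
    (P : X →L[ℝ] X) (hP : ∀ x : X, P x ∈ X' ∧ x - P x ∈ X'ᗮ)
    (rt : X) (hrtmem : rt ∈ X') (hrt : F rt = 0)
    (σ : ℝ) (hσ : 0 < σ) (hlow : ∀ x : X, σ * ‖x‖ ≤ ‖fderiv ℝ F rt x‖)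
    (d₀ : ℝ) (hd₀ : 0 < d₀)
    (ε : ℝ) (hε0 : 0 < ε) (hε3 : ε < 3)
    (α : ℝ) (hα : 0 < α) (hαle : α ≤ ε * σ ^ 2 / (3 - ε))
    (c₀ : ℝ) (hc₀ : c₀ = 4 * ε / (3 * d₃ * (9 * d₁ + Real.sqrt α)))
    (r : X) (hrmem : r ∈ X') (hrclose : ‖rt - r‖ ≤ d₀ * c₀ * α)
    (B : X →L[ℝ] X)
    (hB₁ : B ∘L (α • (1 : X →L[ℝ] X) +
      ContinuousLinearMap.adjoint (fderiv ℝ F r) ∘L fderiv ℝ F r) = 1)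
    (hB₂ : (α • (1 : X →L[ℝ] X) +
      ContinuousLinearMap.adjoint (fderiv ℝ F r) ∘L fderiv ℝ F r) ∘L B = 1)
    (rplus : X)
    (hrplus : rplus =
      r - P ((B ∘L ContinuousLinearMap.adjoint (fderiv ℝ F r)) (F r))) :
    ‖rt - rplus‖ ≤ ε * (1 + d₀) / 3 * ‖rt - r‖ :=
  stmt_14_general F hF d₁ d₃ hd₁ hd₃ hF' hF'' X' P hP rt hrtmem hrt σ hσ hlow d₀ ε hε0 hε3 α hα hαle
    c₀ hc₀ r hrmem hrclose B hB₁ hB₂ rplus hrplus
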